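/- Let R be a right noetherian, left P-injective ring in which every nonzero complement left ideal is not small. Then R/J(R) is a von Neumann regular ring. -/
import Mathlib


open MulOpposite in
/-- Right ideals of `R`, as submodules of `R` over `Rᵐᵒᵖ`. -/
abbrev RIdeal (R : Type*) [Ring R] := Submodule Rᵐᵒᵖ R

section Defs
variable (R : Type*) [Ring R]

/-- Left annihilator of a subset. -/
def lAnn (X : Set R) : Set R := {a | ∀ x ∈ X, a * x = 0}

/-- Right annihilator of a subset. -/
def rAnn (X : Set R) : Set R := {a | ∀ x ∈ X, x * a = 0}

/-- Right annihilator of a subset, as a right ideal. -/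
def rAnnI (X : Set R) : RIdeal R where
  carrier := rAnn R X
  add_mem' := by intro a b ha hb x hx; rw [mul_add, ha x hx, hb x hx, add_zero]
  zero_mem' := by intro x hx; rw [mul_zero]
  smul_mem' := by
    intro c a ha x hx
    show x * (a * c.unop) = 0
    rw [← mul_assoc, ha x hx, zero_mul]

/-- `R` is left P-injective: `rl(a) = aR` for every `a`. -/
def IsLeftPInjective : Prop :=
  ∀ a x : R, (∀ u : R, u * a = 0 → u * x = 0) ↔ ∃ s : R, x = a * s

/-- `R` is left 2-injective. -/
def IsLeft2Injective : Prop :=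
  ∀ (a b : R) (f : ↥(Submodule.span R ({a, b} : Set R)) →ₗ[R] R),
    ∃ g : R →ₗ[R] R, ∀ x : ↥(Submodule.span R ({a, b} : Set R)), g (x : R) = f x

/-- `R` is left FP-injective: every matrix ring over `R` is left P-injective. -/
def IsLeftFPInjective : Prop :=
  ∀ n : ℕ, IsLeftPInjective (Matrix (Fin n) (Fin n) R)

/-- A left ideal is small if `K + I = R` implies `K = R`. -/
def IsSmallLeftIdeal (I : Ideal R) : Prop := ∀ K : Ideal R, K ⊔ I = ⊤ → K = ⊤

/-- A complement left ideal: maximal with respect to intersecting some left ideal trivially. -/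
def IsComplementLeftIdeal (C : Ideal R) : Prop :=
  ∃ S : Ideal R, C ⊓ S = ⊥ ∧ ∀ C' : Ideal R, C ≤ C' → C' ⊓ S = ⊥ → C' = C

/-- A right ideal is essential in `R`. -/
def IsEssentialRIdeal (I : RIdeal R) : Prop := ∀ K : RIdeal R, K ⊓ I = ⊥ → K = ⊥

/-- The right socle: the sum of all simple (minimal) right ideals. -/
def rSocle : RIdeal R := sSup {m : RIdeal R | IsSimpleModule Rᵐᵒᵖ m}

/-- The right singular ideal. -/
def rSingular : Set R := {a | IsEssentialRIdeal R (rAnnI R {a})}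

/-- ACC on right annihilators. -/
def ACCOnRightAnnihilators : Prop :=
  ∀ f : ℕ → Set R, (∀ n, ∃ X : Set R, f n = rAnn R X) → (∀ n, f n ⊆ f (n + 1)) →
    ∃ n, ∀ m, n ≤ m → f m = f n

/-- The Jacobson radical, as a set. -/
def jacobsonSet : Set R := (TwoSidedIdeal.jacobson (⊥ : TwoSidedIdeal R) : Set R)

/-- A subset is nilpotent if products of some fixed length of its elements vanish. -/
def IsNilpotentSet (J : Set R) : Prop :=
  ∃ n : ℕ, ∀ f : Fin (n + 1) → R, (∀ i, f i ∈ J) → (List.ofFn f).prod = 0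

/-- `R` is quasi-Frobenius: left noetherian and left self-injective. -/
def IsQuasiFrobenius : Prop := IsNoetherianRing R ∧ Module.Injective R R

/-- `R` is right mininjective. -/
def IsRightMininjective : Prop :=
  ∀ (I : RIdeal R), IsSimpleModule Rᵐᵒᵖ I → ∀ f : I →ₗ[Rᵐᵒᵖ] R,
    ∃ c : R, ∀ x : I, f x = c * (x : R)

/-- `R` is left mininjective. -/
def IsLeftMininjective : Prop :=
  ∀ (I : Ideal R), IsSimpleModule R I → ∀ f : I →ₗ[R] R,
    ∃ c : R, ∀ x : I, f x = (x : R) * c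

/-- `R` is right simple injective. -/
def IsRightSimpleInjective : Prop :=
  ∀ (I : RIdeal R) (f : I →ₗ[Rᵐᵒᵖ] R), IsSimpleModule Rᵐᵒᵖ (LinearMap.range f) →
    ∃ c : R, ∀ x : I, f x = c * (x : R)

/-- `R` is left CS: every left ideal is essential in a direct summand of `R`. -/
def IsLeftCS : Prop :=
  ∀ I : Ideal R, ∃ K : Ideal R, (∃ K' : Ideal R, IsCompl K K') ∧ I ≤ K ∧
    ∀ L : Ideal R, L ≤ K → L ⊓ I = ⊥ → L = ⊥

/-- `R` is left min-CS: every minimal left ideal is essential in a direct summand. -/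
def IsLeftMinCS : Prop :=
  ∀ I : Ideal R, IsSimpleModule R I → ∃ K : Ideal R, (∃ K' : Ideal R, IsCompl K K') ∧ I ≤ K ∧
    ∀ L : Ideal R, L ≤ K → L ⊓ I = ⊥ → L = ⊥

/-- `R` is right Johns: right noetherian and every right ideal is a right annihilator. -/
def IsRightJohns : Prop :=
  IsNoetherianRing Rᵐᵒᵖ ∧ ∀ I : RIdeal R, ∃ X : Set R, (I : Set R) = rAnn R X

end Defs

section MoreDefs
variable (R : Type*) [Ring R]

/-- Left annihilator of a subset, as a left ideal. -/
def lAnnI (X : Set R) : Ideal R where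
  carrier := lAnn R X
  add_mem' := by intro a b ha hb x hx; rw [add_mul, ha x hx, hb x hx, add_zero]
  zero_mem' := by intro x hx; rw [zero_mul]
  smul_mem' := by
    intro c a ha x hx
    show c * a * x = 0
    rw [mul_assoc, ha x hx, mul_zero]

/-- A left ideal is essential in `R`. -/
def IsEssentialLIdeal (I : Ideal R) : Prop := ∀ K : Ideal R, K ⊓ I = ⊥ → K = ⊥

/-- The left singular ideal `Z_l`. -/
def lSingular : Set R := {a | IsEssentialLIdeal R (lAnnI R {a})}

end MoreDefs

section StmtFiveProof

open Submodule MulOpposite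

variable {R : Type*} [Ring R]

/-- Left multiplication by `y`, as a map of right `R`-modules (`Rᵐᵒᵖ`-modules). -/
private def lmulOp (y : R) : R →ₗ[Rᵐᵒᵖ] R where
  toFun v := y * v
  map_add' u v := by show y * (u + v) = y * u + y * v; rw [mul_add]
  map_smul' m v := by
    show y * (v * m.unop) = (y * v) * m.unop
    rw [mul_assoc]

private lemma lmulOp_apply (y v : R) : lmulOp y v = y * v := rfl

private lemma mem_rAnnI_singleton {w v : R} : v ∈ rAnnI R {w} ↔ w * v = 0 :=
  ⟨fun h => h w rfl, fun h u hu => by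
    rw [Set.mem_singleton_iff] at hu; rw [hu]; exact h⟩

private lemma mem_lAnnI_singleton {w v : R} : v ∈ lAnnI R {w} ↔ v * w = 0 :=
  ⟨fun h => h w rfl, fun h u hu => by
    rw [Set.mem_singleton_iff] at hu; rw [hu]; exact h⟩

/-- Essentiality is inherited by larger submodules. -/
private lemma essMono {S M : Type*} [Semiring S] [AddCommMonoid M] [Module S M]
    {E E' : Submodule S M} (h : E ≤ E')
    (hE : ∀ K : Submodule S M, K ⊓ E = ⊥ → K = ⊥) :
    ∀ K : Submodule S M, K ⊓ E' = ⊥ → K = ⊥ := by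
  intro K hK
  apply hE
  exact le_bot_iff.mp (le_trans (inf_le_inf_left K h) hK.le)

/-- The preimage of an essential submodule under an endomorphism is essential. -/
private lemma essComap {S M : Type*} [Semiring S] [AddCommMonoid M] [Module S M]
    (φ : M →ₗ[S] M) {E : Submodule S M}
    (hE : ∀ K : Submodule S M, K ⊓ E = ⊥ → K = ⊥) :
    ∀ K : Submodule S M, K ⊓ comap φ E = ⊥ → K = ⊥ := by
  intro K hK
  by_cases hmap : map φ K = ⊥
  · have hle : K ≤ comap φ E := by
      intro k hk
      have h1 : φ k ∈ map φ K := mem_map_of_mem hk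
      rw [hmap, mem_bot] at h1
      rw [mem_comap, h1]
      exact zero_mem E
    rw [← hK, inf_eq_left.mpr hle]
  · exfalso
    apply hmap
    apply hE
    rw [eq_bot_iff]
    rintro z hz
    obtain ⟨hz1, hz2⟩ := mem_inf.mp hz
    obtain ⟨k, hk, rfl⟩ := mem_map.mp hz1
    have hmem : k ∈ K ⊓ comap φ E := mem_inf.mpr ⟨hk, mem_comap.mpr hz2⟩
    rw [hK, mem_bot] at hmem
    rw [mem_bot, hmem, map_zero]

/-- Transfer of noetherianity from `Rᵐᵒᵖ` to `R` as a right module. -/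
private def opToRight : Rᵐᵒᵖ ≃ₗ[Rᵐᵒᵖ] R where
  toFun := unop
  invFun := op
  map_add' _ _ := rfl
  map_smul' _ _ := rfl
  left_inv _ := rfl
  right_inv _ := rfl

private lemma noethRight [IsNoetherianRing Rᵐᵒᵖ] : IsNoetherian Rᵐᵒᵖ R :=
  isNoetherian_of_linearEquiv (opToRight (R := R))

/-- If `r(y) = 0` then `yR` is an essential right ideal (uses right noetherianity). -/
private lemma ess_range_lmul [IsNoetherianRing Rᵐᵒᵖ] {y : R}
    (hy : ∀ v, y * v = 0 → v = 0) :
    ∀ K : Submodule Rᵐᵒᵖ R, K ⊓ LinearMap.range (lmulOp y) = ⊥ → K = ⊥ := by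
  haveI := noethRight (R := R)
  intro K hK
  -- the chain T 0 = K, T (n+1) = K ⊔ y ⬝ (T n)
  let T : ℕ → Submodule Rᵐᵒᵖ R := fun n =>
    Nat.rec K (fun _ S => K ⊔ map (lmulOp y) S) n
  have hmono : Monotone T := by
    apply monotone_nat_of_le_succ
    intro n
    induction n with
    | zero => exact (le_sup_left : K ≤ K ⊔ map (lmulOp y) (T 0))
    | succ n ih => exact sup_le_sup_left (map_mono ih) K
  -- key: if y^(n+1) * k ∈ T n with k ∈ K then k = 0
  have key : ∀ n, ∀ k ∈ K, y ^ (n + 1) * k ∈ T n → k = 0 := by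
    intro n
    induction n with
    | zero =>
      intro k hk h
      have h' : y ^ (0 + 1) * k ∈ K := h
      rw [zero_add, pow_one] at h'
      have hyk : y * k ∈ K ⊓ LinearMap.range (lmulOp y) :=
        mem_inf.mpr ⟨h', ⟨k, rfl⟩⟩
      rw [hK, mem_bot] at hyk
      exact hy k hyk
    | succ n ih =>
      intro k hk h
      have h' : y ^ (n + 1 + 1) * k ∈ K ⊔ map (lmulOp y) (T n) := h
      obtain ⟨k₀, hk₀, m, hm, hsum⟩ := mem_sup.mp h'
      obtain ⟨s, hs, rfl⟩ := mem_map.mp hm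
      have hsum' : k₀ + y * s = y ^ (n + 1 + 1) * k := hsum
      have hk₀eq : k₀ = y * (y ^ (n + 1) * k - s) := by
        have h7 : y * (y ^ (n + 1) * k - s) = y ^ (n + 1 + 1) * k - y * s := by
          rw [mul_sub, ← mul_assoc, ← pow_succ']
        rw [h7, ← hsum']
        abel
      have hk₀mem : k₀ ∈ K ⊓ LinearMap.range (lmulOp y) :=
        mem_inf.mpr ⟨hk₀, ⟨y ^ (n + 1) * k - s, hk₀eq.symm⟩⟩
      rw [hK, mem_bot] at hk₀mem
      rw [hk₀mem] at hk₀eq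
      have hzero : y ^ (n + 1) * k - s = 0 := hy _ hk₀eq.symm
      have hss : y ^ (n + 1) * k = s := sub_eq_zero.mp hzero
      exact ih k hk (hss ▸ hs)
  -- y^n K ≤ T n
  have hpow : ∀ n, ∀ k ∈ K, y ^ n * k ∈ T n := by
    intro n
    induction n with
    | zero =>
      intro k hk
      have h8 : y ^ 0 * k = k := by rw [pow_zero, one_mul]
      rw [h8]
      exact hk
    | succ n ih =>
      intro k hk
      have hmem : y ^ (n + 1) * k ∈ map (lmulOp y) (T n) := by
        refine mem_map.mpr ⟨y ^ n * k, ih k hk, ?_⟩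
        show y * (y ^ n * k) = y ^ (n + 1) * k
        rw [← mul_assoc, ← pow_succ']
      exact mem_sup_right hmem
  -- stabilization
  obtain ⟨n, hn⟩ := monotone_stabilizes_iff_noetherian.mpr (noethRight (R := R)) ⟨T, hmono⟩
  rw [eq_bot_iff]
  intro k hk
  rw [mem_bot]
  apply key n k hk
  have h1 : y ^ (n + 1) * k ∈ T (n + 1) := hpow (n + 1) k hk
  have h2 : T n = T (n + 1) := hn (n + 1) (Nat.le_succ n)
  rw [h2]
  exact h1

/-- Fitting: if `rAnn(w)` is essential then `w` is nilpotent. -/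
private lemma nilpotent_of_ess_rAnn [IsNoetherianRing Rᵐᵒᵖ] {w : R}
    (hw : ∀ K : Submodule Rᵐᵒᵖ R, K ⊓ rAnnI R {w} = ⊥ → K = ⊥) :
    ∃ N : ℕ, w ^ (N + 1) = 0 := by
  haveI := noethRight (R := R)
  have hmono : Monotone (fun n => rAnnI R {w ^ (n + 1)}) := by
    apply monotone_nat_of_le_succ
    intro n v hv
    rw [mem_rAnnI_singleton] at hv ⊢
    rw [pow_succ', mul_assoc, hv, mul_zero]
  obtain ⟨n, hn⟩ := monotone_stabilizes_iff_noetherian.mpr (noethRight (R := R))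
    ⟨fun n => rAnnI R {w ^ (n + 1)}, hmono⟩
  refine ⟨n, ?_⟩
  have hsub : rAnnI R {w} ≤ rAnnI R {w ^ (n + 1)} := by
    intro v hv
    rw [mem_rAnnI_singleton] at hv ⊢
    rw [pow_succ, mul_assoc, hv, mul_zero]
  have hess := essMono hsub hw
  have hfit : LinearMap.range (lmulOp (w ^ (n + 1))) ⊓ rAnnI R {w ^ (n + 1)} = ⊥ := by
    rw [eq_bot_iff]
    intro t ht
    obtain ⟨ht1, ht2⟩ := mem_inf.mp ht
    obtain ⟨s, rfl⟩ := ht1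
    rw [mem_rAnnI_singleton, lmulOp_apply] at ht2
    have h2 : w ^ (2 * n + 1 + 1) * s = 0 := by
      have h3 : w ^ (2 * n + 1 + 1) = w ^ (n + 1) * w ^ (n + 1) := by
        rw [← pow_add]; congr 1; omega
      rw [h3, mul_assoc]
      exact ht2
    have heq : rAnnI R {w ^ (n + 1)} = rAnnI R {w ^ (2 * n + 1 + 1)} :=
      hn (2 * n + 1) (by omega)
    have h4 : s ∈ rAnnI R {w ^ (n + 1)} := by
      rw [heq, mem_rAnnI_singleton]
      exact h2
    rw [mem_rAnnI_singleton] at h4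
    rw [mem_bot, lmulOp_apply]
    exact h4
  have hrange : LinearMap.range (lmulOp (w ^ (n + 1))) = ⊥ := hess _ hfit
  have h5 : w ^ (n + 1) * 1 ∈ LinearMap.range (lmulOp (w ^ (n + 1))) := ⟨1, rfl⟩
  rw [hrange, mem_bot, mul_one] at h5
  exact h5

/-- If `rAnn(u)` is essential as a right ideal, then `u` is in the Jacobson radical. -/
private lemma mem_jacobsonSet_of_ess_rAnn [IsNoetherianRing Rᵐᵒᵖ] {u : R}
    (hu : ∀ K : Submodule Rᵐᵒᵖ R, K ⊓ rAnnI R {u} = ⊥ → K = ⊥) :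
    u ∈ jacobsonSet R := by
  have hmem : u ∈ TwoSidedIdeal.jacobson (⊥ : TwoSidedIdeal R) := by
    rw [TwoSidedIdeal.mem_jacobson_iff]
    intro y
    have hsub : rAnnI R {u} ≤ rAnnI R {y * u} := by
      intro v hv
      rw [mem_rAnnI_singleton] at hv ⊢
      rw [mul_assoc, hv, mul_zero]
    obtain ⟨N, hN⟩ := nilpotent_of_ess_rAnn (essMono hsub hu)
    refine ⟨∑ i ∈ Finset.range (N + 1), (-(y * u)) ^ i, ?_⟩
    rw [TwoSidedIdeal.mem_bot]
    have hgeom := geom_sum_mul (-(y * u)) (N + 1)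
    rw [neg_pow, hN, mul_zero] at hgeom
    -- hgeom : (∑ ...) * (-(y*u) - 1) = 0 - 1
    have hz : (∑ i ∈ Finset.range (N + 1), (-(y * u)) ^ i) * (y * u + 1) = 1 := by
      have h2 : (∑ i ∈ Finset.range (N + 1), (-(y * u)) ^ i) * (-(y * u + 1)) = -1 := by
        rw [show -(y * u + 1) = -(y * u) - 1 by abel, hgeom, zero_sub]
      rw [mul_neg] at h2
      exact neg_injective h2
    calc (∑ i ∈ Finset.range (N + 1), (-(y * u)) ^ i) * y * u
          + (∑ i ∈ Finset.range (N + 1), (-(y * u)) ^ i) - 1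
        = (∑ i ∈ Finset.range (N + 1), (-(y * u)) ^ i) * (y * u + 1) - 1 := by
          rw [mul_add, mul_one, ← mul_assoc]
      _ = 1 - 1 := by rw [hz]
      _ = 0 := sub_self 1
  exact hmem

end StmtFiveProof

section StmtFiveProof2

open Submodule MulOpposite

variable {R : Type*} [Ring R]

/-- P-injectivity: if `lAnn w` is essential then `1 + w` is right invertible. -/
private lemma right_inv_of_ess (hP : IsLeftPInjective R) {w : R}
    (hw : ∀ K : Ideal R, K ⊓ lAnnI R {w} = ⊥ → K = ⊥) :
    ∃ s, (1 + w) * s = 1 := by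
  have h0 : lAnnI R {1 + w} = ⊥ := by
    apply hw
    rw [eq_bot_iff]
    intro u hu
    obtain ⟨hu1, hu2⟩ := mem_inf.mp hu
    rw [mem_lAnnI_singleton] at hu1 hu2
    rw [mem_bot]
    rw [mul_add, mul_one, hu2, add_zero] at hu1
    exact hu1
  have hcond : ∀ u : R, u * (1 + w) = 0 → u * 1 = 0 := by
    intro u hu
    have h1 : u ∈ lAnnI R {1 + w} := mem_lAnnI_singleton.mpr hu
    rw [h0, mem_bot] at h1
    rw [h1, zero_mul]
  obtain ⟨s, hs⟩ := (hP (1 + w) 1).mp hcond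
  exact ⟨s, hs.symm⟩

/-- If `lAnn x` is essential as a left ideal, then `x` is in the Jacobson radical. -/
private lemma mem_jacobsonSet_of_ess_lAnn (hP : IsLeftPInjective R) {x : R}
    (hx : ∀ K : Ideal R, K ⊓ lAnnI R {x} = ⊥ → K = ⊥) :
    x ∈ jacobsonSet R := by
  have hmem : x ∈ TwoSidedIdeal.jacobson (⊥ : TwoSidedIdeal R) := by
    rw [TwoSidedIdeal.mem_jacobson_iff]
    intro y
    -- w := y * x has essential left annihilator
    have hcw : ∀ K : Ideal R, K ⊓ lAnnI R {y * x} = ⊥ → K = ⊥ := by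
      have hsub : comap (LinearMap.toSpanSingleton R R y) (lAnnI R {x})
          ≤ lAnnI R {y * x} := by
        intro v hv
        rw [mem_comap] at hv
        have h1 : (v • y) * x = 0 := mem_lAnnI_singleton.mp hv
        rw [smul_eq_mul] at h1
        rw [mem_lAnnI_singleton, ← mul_assoc]
        exact h1
      exact essMono hsub (essComap _ hx)
    obtain ⟨s, hs⟩ := right_inv_of_ess hP hcw
    have hsw : s = 1 - (y * x) * s := by
      have h2 : s + (y * x) * s = 1 := by
        rw [← hs, add_mul, one_mul]
      rw [← h2]; abel
    have hw' : ∀ K : Ideal R, K ⊓ lAnnI R {-((y * x) * s)} = ⊥ → K = ⊥ := by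
      refine essMono ?_ hcw
      intro v hv
      rw [mem_lAnnI_singleton] at hv ⊢
      rw [mul_neg, ← mul_assoc, hv, zero_mul, neg_zero]
    obtain ⟨t, ht⟩ := right_inv_of_ess hP hw'
    have h1w' : 1 + -((y * x) * s) = s := by
      conv_rhs => rw [hsw]
      rw [sub_eq_add_neg]
    rw [h1w'] at ht
    have hts : t = 1 + y * x := by
      calc t = 1 * t := (one_mul t).symm
        _ = ((1 + y * x) * s) * t := by rw [hs]
        _ = (1 + y * x) * (s * t) := mul_assoc _ _ _
        _ = 1 + y * x := by rw [ht, mul_one]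
    have hfin : s * (1 + y * x) = 1 := by rw [← hts, ht]
    refine ⟨s, ?_⟩
    rw [TwoSidedIdeal.mem_bot]
    calc s * y * x + s - 1 = s * (1 + y * x) - 1 := by
          rw [mul_add, mul_one, ← mul_assoc, add_comm (s * y * x) s]
      _ = 1 - 1 := by rw [hfin]
      _ = 0 := sub_self 1
  exact hmem

/-- A left ideal contained in the Jacobson radical is small. -/
private lemma small_of_subset_jac {C : Ideal R} (h : ∀ c ∈ C, c ∈ jacobsonSet R) :
    IsSmallLeftIdeal R C := by
  intro K hK
  have h1 : (1 : R) ∈ K ⊔ C := by rw [hK]; trivial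
  obtain ⟨k, hk, c, hc, hkc⟩ := mem_sup.mp h1
  have hcj : c ∈ TwoSidedIdeal.jacobson (⊥ : TwoSidedIdeal R) := h c hc
  rw [TwoSidedIdeal.mem_jacobson_iff] at hcj
  obtain ⟨z, hz⟩ := hcj (-1)
  rw [TwoSidedIdeal.mem_bot] at hz
  have hk1 : k = 1 - c := by rw [← hkc]; abel
  have hzk : z * k = 1 := by
    rw [hk1, mul_sub, mul_one]
    rw [mul_neg_one, neg_mul] at hz
    have h4 : -(z * c) + z = 1 := by rwa [sub_eq_zero] at hz
    rw [← h4]; abel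
  rw [Ideal.eq_top_iff_one]
  have h5 : z • k ∈ K := K.smul_mem z hk
  rwa [smul_eq_mul, hzk] at h5

/-- Zorn: every left ideal disjoint from `L` extends to a maximal such (a complement). -/
private lemma exists_complement (L K : Ideal R) (hKL : K ⊓ L = ⊥) :
    ∃ C : Ideal R, K ≤ C ∧ C ⊓ L = ⊥ ∧
      ∀ C' : Ideal R, C ≤ C' → C' ⊓ L = ⊥ → C' = C := by
  have hchaincond : ∀ c ⊆ {C : Ideal R | C ⊓ L = ⊥}, IsChain (· ≤ ·) c → ∀ y ∈ c,
      ∃ ub ∈ {C : Ideal R | C ⊓ L = ⊥}, ∀ z ∈ c, z ≤ ub := by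
    intro c hcs hchain y hy
    refine ⟨sSup c, ?_, fun z hz => le_sSup hz⟩
    rw [Set.mem_setOf_eq, eq_bot_iff]
    intro v hv
    obtain ⟨hv1, hv2⟩ := mem_inf.mp hv
    obtain ⟨D, hD, hvD⟩ := (mem_sSup_of_directed ⟨y, hy⟩ hchain.directedOn).mp hv1
    have h6 : v ∈ D ⊓ L := mem_inf.mpr ⟨hvD, hv2⟩
    have hD' : D ⊓ L = ⊥ := hcs hD
    rw [hD', mem_bot] at h6
    rw [mem_bot, h6]
  obtain ⟨C, hKC, hCmax⟩ := zorn_le_nonempty₀ {C : Ideal R | C ⊓ L = ⊥} hchaincond K hKL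
  exact ⟨C, hKC, hCmax.prop,
    fun C' hCC' hC' => le_antisymm (hCmax.le_of_ge hC' hCC') hCC'⟩

end StmtFiveProof2

open Submodule in
/-- If moreover every nonzero complement left ideal is not small, `R/J` is von Neumann regular. -/
theorem stmt5 {R : Type*} [Ring R] [IsNoetherianRing Rᵐᵒᵖ] (hP : IsLeftPInjective R)
    (hC : ∀ C : Ideal R, IsComplementLeftIdeal R C → C ≠ ⊥ → ¬ IsSmallLeftIdeal R C) :
    ∀ a : R, ∃ b : R, a - a * b * a ∈ jacobsonSet R := by
  intro a
  -- choose b₀ maximizing the right annihilator of a - a*b*a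
  obtain ⟨M, hM, hMmax⟩ := (set_has_maximal_iff_noetherian.mpr (noethRight (R := R)))
    {N : Submodule Rᵐᵒᵖ R | ∃ b : R, N = rAnnI R {a - a * b * a}} ⟨rAnnI R {a - a * 0 * a}, 0, rfl⟩
  obtain ⟨b₀, hb₀⟩ := hM
  refine ⟨b₀, ?_⟩
  apply mem_jacobsonSet_of_ess_lAnn hP
  set x := a - a * b₀ * a with hxdef
  -- show lAnn x is an essential left ideal
  intro K hK
  by_contra hKbot
  obtain ⟨C, hKC, hCL, hCmax⟩ := exists_complement (lAnnI R {x}) K hK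
  have hCcomp : IsComplementLeftIdeal R C := ⟨lAnnI R {x}, hCL, hCmax⟩
  have hCne : C ≠ ⊥ := by
    intro h
    exact hKbot (le_bot_iff.mp (h ▸ hKC))
  have hnotsmall := hC C hCcomp hCne
  -- pick c ∈ C outside the radical
  have hcex : ∃ c ∈ C, c ∉ jacobsonSet R := by
    by_contra h
    push_neg at h
    exact hnotsmall (small_of_subset_jac h)
  obtain ⟨c, hcC, hcJ⟩ := hcex
  -- use P-injectivity: c = (c*x)*t for some t
  have hdiv : ∃ t, c = (c * x) * t := by
    apply (hP (c * x) c).mp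
    intro u hu
    have h1 : u * c ∈ C := C.mul_mem_left u hcC
    have h2 : u * c ∈ lAnnI R {x} := by
      rw [mem_lAnnI_singleton, mul_assoc]
      exact hu
    have h3 : u * c ∈ C ⊓ lAnnI R {x} := mem_inf.mpr ⟨h1, h2⟩
    rw [hCL, mem_bot] at h3
    exact h3
  obtain ⟨t, hct⟩ := hdiv
  -- maximality: rAnn (x - x*t*x) = M
  have hfam : rAnnI R {a - a * (b₀ + (1 - b₀ * a) * t * (1 - a * b₀)) * a}
      ∈ {N : Submodule Rᵐᵒᵖ R | ∃ b : R, N = rAnnI R {a - a * b * a}} :=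
    ⟨b₀ + (1 - b₀ * a) * t * (1 - a * b₀), rfl⟩
  have hid : a - a * (b₀ + (1 - b₀ * a) * t * (1 - a * b₀)) * a = x - x * t * x := by
    rw [hxdef]; noncomm_ring
  rw [hid] at hfam
  have hle : M ≤ rAnnI R {x - x * t * x} := by
    intro v hv
    rw [hb₀, mem_rAnnI_singleton] at hv
    rw [mem_rAnnI_singleton, sub_mul]
    have h6 : x * t * x * v = 0 := by rw [mul_assoc (x * t) x v, hv, mul_zero]
    rw [hv, h6, sub_zero]
  have heq : rAnnI R {x - x * t * x} = M := by
    by_contra hne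
    exact hMmax _ hfam (lt_of_le_of_ne hle (Ne.symm hne))
  -- r(1 - t*x) = 0
  have htx : ∀ v, v = t * (x * v) → v = 0 := by
    intro v hv
    have h2 : x * t * x * v = x * v := by
      rw [mul_assoc, mul_assoc, ← hv]
    have h1 : (x - x * t * x) * v = 0 := by
      rw [sub_mul, h2, sub_self]
    have h3 : v ∈ rAnnI R {x - x * t * x} := mem_rAnnI_singleton.mpr h1
    rw [heq, hb₀] at h3
    have h4 : x * v = 0 := mem_rAnnI_singleton.mp h3
    rw [hv, h4, mul_zero]
  -- r(1 - x*t) = 0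
  have hxt : ∀ v, v = x * (t * v) → v = 0 := by
    intro v hv
    have h1 : t * v = t * (x * (t * v)) := by rw [← hv]
    have h2 : t * v = 0 := htx (t * v) h1
    rw [hv, h2, mul_zero]
  have hyreg : ∀ v, (1 - x * t) * v = 0 → v = 0 := by
    intro v hv
    apply hxt
    rw [sub_mul, one_mul] at hv
    have h5 := sub_eq_zero.mp hv
    rw [mul_assoc] at h5
    exact h5
  have hess := ess_range_lmul hyreg
  -- rAnn c contains (1 - x*t)R, hence is essential; so c ∈ J, contradiction
  have hcsub : LinearMap.range (lmulOp (1 - x * t)) ≤ rAnnI R {c} := by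
    rintro w hw
    obtain ⟨v, rfl⟩ := hw
    rw [mem_rAnnI_singleton, lmulOp_apply, ← mul_assoc]
    have h5 : c * (1 - x * t) = 0 := by
      rw [mul_sub, mul_one, ← mul_assoc, ← hct, sub_self]
    rw [h5, zero_mul]
  exact hcJ (mem_jacobsonSet_of_ess_rAnn (essMono hcsub hess))
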